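/- arXiv:0907.2503 — 3 statements merged into one kernel-verified Lean document; each statement's English description precedes it below -/
import Mathlib

section
/- Let (T,q) be a quadratic space over ℚ, E a totally real number field acting on T by q-self-adjoint endomorphisms, and Ẽ a normal closure of E/ℚ with Galois group G. The semilinear G-action on C(q) ⊗_ℚ Ẽ ≅ C(q_1) ⊗̂ ⋯ ⊗̂ C(q_d) (induced by the G-action on T ⊗ Ẽ permuting the orthogonal eigenspaces T_i) restricts, for each τ ∈ G and each i, to an isomorphism of ℤ/2-graded ℚ-algebras C(q_i) → C(q_{τ(i)}), and satisfies τ(C^{a}(q)) = C^{τa}(q), where C^{a}(q) = C^{a_1}(q_1) ⊗ ⋯ ⊗ C^{a_d}(q_d) for a ∈ {0,1}^d and (τa)_i = a_{τ^{-1}(i)}. -/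
/-!
The Galois action is `τ ⊗ id` on `F ⊗ C(q)`, transported to `C(q_F)`. It is a `τ`-semilinear ring
automorphism, so it carries products, powers and sums of `F`-subspaces to the corresponding
ones, and it sends `ι(T_σ)` onto `ι(T_{τσ})` because `τ ⊗ id` commutes with each `e ⊗ id`.
This settles the pieces `C^a(q_σ)`. On `C^𝐚(q)` the factors are moreover permuted by
`σ ↦ τσ`; self-adjointness makes distinct eigenspaces `T_σ, T_σ'` orthogonal, so their images
anticommute in `C(q_F)` and the pieces `C^a(q_σ)`, `C^{a'}(q_σ')` commute as subspaces, whence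
the product does not depend on the order of its factors.
-/

open TensorProduct Module

variable (E F : Type) [Field E] [Field F] [Algebra ℚ E] [Algebra ℚ F]
variable (T : Type) [AddCommGroup T] [Module ℚ T] [Module E T] [IsScalarTower ℚ E T]
  [SMulCommClass ℚ E T]

/-- Scalar multiplication by `e ∈ E` on `T`, as a `ℚ`-linear endomorphism. -/
def smulE (e : E) : T →ₗ[ℚ] T where
  toFun t := e • t
  map_add' x y := smul_add e x y
  map_smul' q t := smul_comm e q t

/-- The `σ`-eigenspace `T_σ ⊆ T ⊗_ℚ F` of the (extended) `E`-action. -/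
noncomputable def eigenspaceE (σ : E →ₐ[ℚ] F) : Submodule F (F ⊗[ℚ] T) :=
  ⨅ e : E, Module.End.eigenspace (LinearMap.baseChange F (smulE E T e)) (σ e)

variable (q : QuadraticForm ℚ T)

/-- The semilinear Galois action of `τ ∈ Gal(F/ℚ)` on `C(q)_F = C(q ⊗ F)`, i.e. the
`τ`-semilinear extension of the identity of `C(q)`, transported through
`C(q.baseChange F) ≅ F ⊗ C(q)`. -/
noncomputable def galActClifford (τ : F ≃ₐ[ℚ] F) :
    CliffordAlgebra (q.baseChange F) →ₗ[ℚ] CliffordAlgebra (q.baseChange F) :=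
  (((CliffordAlgebra.equivBaseChange F q).symm.toLinearMap).restrictScalars ℚ) ∘ₗ
    (LinearMap.rTensor (CliffordAlgebra q) (τ.toLinearMap : F →ₗ[ℚ] F)) ∘ₗ
      (((CliffordAlgebra.equivBaseChange F q).toLinearMap).restrictScalars ℚ)

/-- The parity-`a` part `C^a(q_σ)` of the Clifford algebra `C(q_σ)` of the eigenspace
`T_σ`, viewed as a subspace of `C(q)_F`: the span of products of `n` vectors of `T_σ`
with `n ≡ a (mod 2)`. -/
noncomputable def cliffordEigenPiece (σ : E →ₐ[ℚ] F) (a : ZMod 2) :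
    Submodule F (CliffordAlgebra (q.baseChange F)) :=
  ⨆ j : {n : ℕ // (n : ZMod 2) = a},
    ((eigenspaceE E F T σ).map (CliffordAlgebra.ι (q.baseChange F))) ^ (j : ℕ)

/-- The subspace `C^{𝐚}(q) = C^{a₁}(q₁) ⊗ ⋯ ⊗ C^{a_d}(q_d)` of `C(q)_F`, for a parity
tuple `𝐚` indexed by the embeddings `σ : E ↪ F` (enumerated by `b`). -/
noncomputable def cliffordTuplePiece (dd : ℕ) (b : Fin dd ≃ (E →ₐ[ℚ] F))
    (a : (E →ₐ[ℚ] F) → ZMod 2) : Submodule F (CliffordAlgebra (q.baseChange F)) :=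
  (List.ofFn (fun k : Fin dd => cliffordEigenPiece E F T q (b k) (a (b k)))).prod

namespace Submodule

section Semilinear

variable {R A B : Type*} [CommSemiring R] [Semiring A] [Semiring B] [Algebra R A] [Algebra R B]
  {σ : R →+* R} [RingHomSurjective σ]

open scoped Pointwise in
theorem map_mul_of_map_mul (f : A →ₛₗ[σ] B) (hf : ∀ x y, f (x * y) = f x * f y)
    (M N : Submodule R A) : (M * N).map f = M.map f * N.map f := by
  let g : A →ₙ* B := ⟨f, hf⟩
  calc (M * N).map f = span R (g '' ((M : Set A) * (N : Set A))) := by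
        rw [mul_def, map_span]; rfl
    _ = M.map f * N.map f := by
      rw [Set.image_mul, ← span_mul_span]
      simp only [g, MulHom.coe_mk, ← map_coe, span_eq]

theorem map_one_of_map_one (f : A →ₛₗ[σ] B) (hf : f 1 = 1) :
    (1 : Submodule R A).map f = 1 := by
  rw [one_eq_span, one_eq_span, map_span, Set.image_singleton, hf]

def mapMonoidHom (f : A →ₛₗ[σ] B) (hf₁ : f 1 = 1) (hf : ∀ x y, f (x * y) = f x * f y) :
    Submodule R A →* Submodule R B where
  toFun p := p.map f
  map_one' := map_one_of_map_one f hf₁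
  map_mul' := map_mul_of_map_mul f hf

end Semilinear

theorem commute_iSup_iSup {R A : Type*} [CommSemiring R] [Semiring A] [Algebra R A]
    {ι κ : Sort*} {s : ι → Submodule R A} {t : κ → Submodule R A}
    (h : ∀ i j, Commute (s i) (t j)) : Commute (⨆ i, s i) (⨆ j, t j) := by
  change _ * _ = _ * _
  simp_rw [iSup_mul, mul_iSup]
  rw [iSup_comm]
  exact iSup_congr fun j => iSup_congr fun i => (h i j).eq

theorem commute_of_forall_mul_eq_neg {R A : Type*} [CommRing R] [Ring A] [Algebra R A]
    {M N : Submodule R A} (h : ∀ x ∈ M, ∀ y ∈ N, x * y = -(y * x)) : Commute M N := by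
  refine le_antisymm (mul_le.2 fun x hx y hy => ?_) (mul_le.2 fun y hy x hx => ?_)
  · rw [h x hx y hy]
    exact neg_mem (mul_mem_mul hy hx)
  · rw [← neg_neg (y * x), ← h x hx y hy]
    exact neg_mem (mul_mem_mul hx hy)

end Submodule

theorem List.prod_ofFn_comp_perm_of_pairwise_commute {M ι : Type*} [Monoid M] {n : ℕ}
    (b : Fin n ≃ ι) (g : Equiv.Perm ι) (f : ι → M)
    (hf : _root_.Pairwise fun i j => Commute (f i) (f j)) :
    (List.ofFn fun k => f (g (b k))).prod = (List.ofFn fun k => f (b k)).prod := by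
  let π : Equiv.Perm (Fin n) := b.trans (g.trans b.symm)
  have hπ : (fun k => f (g (b k))) = (f ∘ b) ∘ π := by ext k; simp [π]
  rw [hπ]
  refine (π.ofFn_comp_perm (f ∘ b)).prod_eq' (List.pairwise_ofFn.2 fun i j hij => ?_)
  exact hf (b.injective.ne (π.injective.ne hij.ne))

theorem LinearMap.IsAdjointPair.baseChange {R A M : Type*} [CommRing R] [CommRing A] [Algebra R A]
    [AddCommGroup M] [Module R M] {B : LinearMap.BilinForm R M} {f : Module.End R M}
    (hf : B.IsAdjointPair B f f) :
    (B.baseChange A).IsAdjointPair (B.baseChange A) (f.baseChange A) (f.baseChange A) := by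
  intro x y
  induction x using TensorProduct.induction_on with
  | zero => simp
  | add x₁ x₂ h₁ h₂ => simp only [map_add, LinearMap.add_apply, h₁, h₂]
  | tmul a m =>
    induction y using TensorProduct.induction_on with
    | zero => simp
    | add y₁ y₂ h₁ h₂ => simp only [map_add, h₁, h₂]
    | tmul a' m' => simp [hf m m']

theorem LinearMap.IsAdjointPair.apply_eq_zero_of_mem_eigenspace {K V : Type*} [Field K]
    [AddCommGroup V] [Module K V] {B : LinearMap.BilinForm K V} {f : Module.End K V}
    (hf : B.IsAdjointPair B f f) {μ ν : K} (hμν : μ ≠ ν) {x y : V}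
    (hx : x ∈ f.eigenspace μ) (hy : y ∈ f.eigenspace ν) : B x y = 0 := by
  rw [Module.End.mem_eigenspace_iff] at hx hy
  have : (μ - ν) * B x y = 0 := by
    rw [sub_mul, ← smul_eq_mul, ← smul_eq_mul, ← LinearMap.map_smul₂, ← map_smul, ← hx, ← hy,
      hf x y, sub_self]
  exact (mul_eq_zero.1 this).resolve_left (sub_ne_zero.2 hμν)

instance AlgEquiv.ringHomSurjective {R A B : Type*} [CommSemiring R] [Semiring A] [Semiring B]
    [Algebra R A] [Algebra R B] (τ : A ≃ₐ[R] B) : RingHomSurjective (τ : A →+* B) :=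
  ⟨τ.surjective⟩

section GaloisActionBaseChange

variable {R S M : Type*} [CommSemiring R] [CommSemiring S] [Algebra R S]
  [AddCommMonoid M] [Module R M]

def galActBaseChange (τ : S ≃ₐ[R] S) : S ⊗[R] M →ₛₗ[(τ : S →+* S)] S ⊗[R] M where
  toFun := LinearMap.rTensor M τ.toLinearMap
  map_add' := map_add _
  map_smul' c x := by
    induction x using TensorProduct.induction_on with
    | zero => simp
    | tmul a m => simp [TensorProduct.smul_tmul']
    | add x y hx hy => simp_all

@[simp]
theorem galActBaseChange_tmul (τ : S ≃ₐ[R] S) (a : S) (m : M) :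
    galActBaseChange τ (a ⊗ₜ m) = τ a ⊗ₜ[R] m :=
  rfl

theorem galActBaseChange_symm_apply (τ : S ≃ₐ[R] S) (x : S ⊗[R] M) :
    galActBaseChange τ (galActBaseChange τ.symm x) = x := by
  induction x using TensorProduct.induction_on with
  | zero => simp
  | tmul a m => simp
  | add x y hx hy => simp_all

theorem galActBaseChange_baseChange (τ : S ≃ₐ[R] S) (f : M →ₗ[R] M) (x : S ⊗[R] M) :
    galActBaseChange τ (f.baseChange S x) = f.baseChange S (galActBaseChange τ x) := by
  induction x using TensorProduct.induction_on with
  | zero => simp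
  | tmul a m => simp
  | add x y hx hy => simp_all

theorem galActBaseChange_mul {A : Type*} [Semiring A] [Algebra R A] (τ : S ≃ₐ[R] S)
    (x y : S ⊗[R] A) :
    galActBaseChange τ (x * y) = galActBaseChange τ x * galActBaseChange τ y :=
  map_mul (Algebra.TensorProduct.rTensor A τ.toAlgHom) x y

theorem galActBaseChange_one {A : Type*} [Semiring A] [Algebra R A] (τ : S ≃ₐ[R] S) :
    galActBaseChange τ (1 : S ⊗[R] A) = 1 :=
  map_one (Algebra.TensorProduct.rTensor A τ.toAlgHom)

end GaloisActionBaseChange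

section GaloisActionClifford

variable {F T}

noncomputable def galActCliffordₛₗ (τ : F ≃ₐ[ℚ] F) :
    CliffordAlgebra (q.baseChange F) →ₛₗ[(τ : F →+* F)] CliffordAlgebra (q.baseChange F) :=
  ((CliffordAlgebra.equivBaseChange F q).symm.toLinearMap.comp (galActBaseChange τ)).comp
    (CliffordAlgebra.equivBaseChange F q).toLinearMap

variable {q}

theorem map_galActClifford_restrictScalars (τ : F ≃ₐ[ℚ] F)
    (p : Submodule F (CliffordAlgebra (q.baseChange F))) :
    (p.restrictScalars ℚ).map (galActClifford F T q τ) =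
      (p.map (galActCliffordₛₗ q τ)).restrictScalars ℚ :=
  rfl

theorem galActCliffordₛₗ_mul (τ : F ≃ₐ[ℚ] F) (x y : CliffordAlgebra (q.baseChange F)) :
    galActCliffordₛₗ q τ (x * y) = galActCliffordₛₗ q τ x * galActCliffordₛₗ q τ y := by
  simp only [galActCliffordₛₗ, LinearMap.comp_apply, AlgEquiv.toLinearMap_apply, map_mul,
    galActBaseChange_mul]

theorem galActCliffordₛₗ_one (τ : F ≃ₐ[ℚ] F) : galActCliffordₛₗ q τ 1 = 1 := by
  simp only [galActCliffordₛₗ, LinearMap.comp_apply, AlgEquiv.toLinearMap_apply, map_one,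
    galActBaseChange_one]

theorem galActCliffordₛₗ_comp_ι (τ : F ≃ₐ[ℚ] F) :
    (galActCliffordₛₗ q τ).comp (CliffordAlgebra.ι (q.baseChange F)) =
      (CliffordAlgebra.ι (q.baseChange F)).comp (galActBaseChange τ) := by
  ext x
  induction x using TensorProduct.induction_on with
  | zero => simp
  | tmul a m => simp [galActCliffordₛₗ]
  | add x y hx hy => simp_all

theorem map_galActCliffordₛₗ_pow (τ : F ≃ₐ[ℚ] F)
    (p : Submodule F (CliffordAlgebra (q.baseChange F))) (n : ℕ) :
    (p ^ n).map (galActCliffordₛₗ q τ) = p.map (galActCliffordₛₗ q τ) ^ n :=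
  map_pow (Submodule.mapMonoidHom _ (galActCliffordₛₗ_one τ) (galActCliffordₛₗ_mul τ)) p n

theorem map_galActCliffordₛₗ_list_prod (τ : F ≃ₐ[ℚ] F)
    (l : List (Submodule F (CliffordAlgebra (q.baseChange F)))) :
    l.prod.map (galActCliffordₛₗ q τ) = (l.map (Submodule.map (galActCliffordₛₗ q τ))).prod :=
  map_list_prod (Submodule.mapMonoidHom _ (galActCliffordₛₗ_one τ) (galActCliffordₛₗ_mul τ)) l

end GaloisActionClifford

section Eigenspaces

variable {E F T} {q}
omit [IsScalarTower ℚ E T] [SMulCommClass ℚ E T]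

theorem mem_eigenspace_of_mem_eigenspaceE {σ : E →ₐ[ℚ] F} {x : F ⊗[ℚ] T}
    (hx : x ∈ eigenspaceE E F T σ) (e : E) :
    x ∈ Module.End.eigenspace ((smulE E T e).baseChange F) (σ e) :=
  Submodule.mem_iInf _ |>.1 hx e

theorem galActBaseChange_mem_eigenspaceE (τ : F ≃ₐ[ℚ] F) {σ : E →ₐ[ℚ] F} {x : F ⊗[ℚ] T}
    (hx : x ∈ eigenspaceE E F T σ) :
    galActBaseChange τ x ∈ eigenspaceE E F T (τ.toAlgHom.comp σ) := by
  refine Submodule.mem_iInf _ |>.2 fun e => Module.End.mem_eigenspace_iff.2 ?_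
  rw [← galActBaseChange_baseChange, Module.End.mem_eigenspace_iff.1
    (mem_eigenspace_of_mem_eigenspaceE hx e), map_smulₛₗ]
  rfl

theorem map_galActBaseChange_eigenspaceE (τ : F ≃ₐ[ℚ] F) (σ : E →ₐ[ℚ] F) :
    (eigenspaceE E F T σ).map (galActBaseChange τ) = eigenspaceE E F T (τ.toAlgHom.comp σ) := by
  refine le_antisymm (Submodule.map_le_iff_le_comap.2 fun x hx =>
    galActBaseChange_mem_eigenspaceE τ hx) fun x hx => ?_
  refine ⟨galActBaseChange τ.symm x, ?_, galActBaseChange_symm_apply τ x⟩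
  simpa [← AlgHom.comp_assoc] using galActBaseChange_mem_eigenspaceE τ.symm hx

theorem map_galActCliffordₛₗ_cliffordEigenPiece (τ : F ≃ₐ[ℚ] F) (σ : E →ₐ[ℚ] F) (a : ZMod 2) :
    (cliffordEigenPiece E F T q σ a).map (galActCliffordₛₗ q τ) =
      cliffordEigenPiece E F T q (τ.toAlgHom.comp σ) a := by
  simp only [cliffordEigenPiece, Submodule.map_iSup, map_galActCliffordₛₗ_pow,
    ← Submodule.map_comp, galActCliffordₛₗ_comp_ι]
  simp only [Submodule.map_comp, map_galActBaseChange_eigenspaceE]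

variable (hadj : ∀ e : E, (QuadraticMap.polarBilin q).IsAdjointPair (QuadraticMap.polarBilin q)
  (smulE E T e) (smulE E T e))
include hadj

theorem polar_baseChange_eq_zero_of_mem_eigenspaceE {σ σ' : E →ₐ[ℚ] F} (hσ : σ ≠ σ')
    {x y : F ⊗[ℚ] T} (hx : x ∈ eigenspaceE E F T σ) (hy : y ∈ eigenspaceE E F T σ') :
    QuadraticMap.polar (q.baseChange F) x y = 0 := by
  obtain ⟨e, he⟩ : ∃ e, σ e ≠ σ' e := not_forall.1 (mt AlgHom.ext hσ)
  have : CharZero F := charZero_of_injective_algebraMap (algebraMap ℚ F).injective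
  have : Invertible (2 : F) := invertibleOfNonzero two_ne_zero
  rw [← QuadraticMap.polarBilin_apply_apply, QuadraticForm.polarBilin_baseChange]
  exact (hadj e).baseChange.apply_eq_zero_of_mem_eigenspace he
    (mem_eigenspace_of_mem_eigenspaceE hx e) (mem_eigenspace_of_mem_eigenspaceE hy e)

theorem commute_map_ι_eigenspaceE {σ σ' : E →ₐ[ℚ] F} (hσ : σ ≠ σ') :
    Commute ((eigenspaceE E F T σ).map (CliffordAlgebra.ι (q.baseChange F)))
      ((eigenspaceE E F T σ').map (CliffordAlgebra.ι (q.baseChange F))) := by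
  refine Submodule.commute_of_forall_mul_eq_neg ?_
  rintro _ ⟨x, hx, rfl⟩ _ ⟨y, hy, rfl⟩
  refine eq_neg_of_add_eq_zero_left ?_
  rw [CliffordAlgebra.ι_mul_ι_add_swap,
    polar_baseChange_eq_zero_of_mem_eigenspaceE hadj hσ hx hy, map_zero]

theorem commute_cliffordEigenPiece {σ σ' : E →ₐ[ℚ] F} (hσ : σ ≠ σ') (a a' : ZMod 2) :
    Commute (cliffordEigenPiece E F T q σ a) (cliffordEigenPiece E F T q σ' a') :=
  Submodule.commute_iSup_iSup fun _ _ => (commute_map_ι_eigenspaceE hadj hσ).pow_pow _ _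

theorem map_galActCliffordₛₗ_cliffordTuplePiece (dd : ℕ) (b : Fin dd ≃ (E →ₐ[ℚ] F))
    (τ : F ≃ₐ[ℚ] F) (a : (E →ₐ[ℚ] F) → ZMod 2) :
    (cliffordTuplePiece E F T q dd b a).map (galActCliffordₛₗ q τ) =
      cliffordTuplePiece E F T q dd b (fun σ => a (τ.symm.toAlgHom.comp σ)) := by
  let a' σ := a (τ.symm.toAlgHom.comp σ)
  let τ' := AlgEquiv.arrowCongr (AlgEquiv.refl : E ≃ₐ[ℚ] E) τ
  have hmap : ∀ σ, (cliffordEigenPiece E F T q σ (a σ)).map (galActCliffordₛₗ q τ) =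
      cliffordEigenPiece E F T q (τ' σ) (a' (τ' σ)) := by
    intro σ
    simp [τ', a', map_galActCliffordₛₗ_cliffordEigenPiece, ← AlgHom.comp_assoc]
  simp only [cliffordTuplePiece, map_galActCliffordₛₗ_list_prod, List.map_ofFn,
    Function.comp_def, hmap]
  exact List.prod_ofFn_comp_perm_of_pairwise_commute b τ'
    (fun σ => cliffordEigenPiece E F T q σ (a' σ))
    fun σ σ' hσ => commute_cliffordEigenPiece hadj hσ _ _

end Eigenspaces

theorem galois_action_on_clifford_pieces
    (dd : ℕ) (b : Fin dd ≃ (E →ₐ[ℚ] F))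
    (hadj : ∀ (e : E) (x y : T),
      QuadraticMap.polarBilin q (e • x) y = QuadraticMap.polarBilin q x (e • y)) :
    (∀ (τ : F ≃ₐ[ℚ] F) (σ : E →ₐ[ℚ] F) (a : ZMod 2),
      Submodule.map (galActClifford F T q τ)
          ((cliffordEigenPiece E F T q σ a).restrictScalars ℚ)
        = (cliffordEigenPiece E F T q (τ.toAlgHom.comp σ) a).restrictScalars ℚ) ∧
    (∀ (τ : F ≃ₐ[ℚ] F) (a : (E →ₐ[ℚ] F) → ZMod 2),
      Submodule.map (galActClifford F T q τ)
          ((cliffordTuplePiece E F T q dd b a).restrictScalars ℚ)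
        = (cliffordTuplePiece E F T q dd b
            (fun σ => a (τ.symm.toAlgHom.comp σ))).restrictScalars ℚ) := by
  refine ⟨fun τ σ a => ?_, fun τ a => ?_⟩
  · rw [map_galActClifford_restrictScalars, map_galActCliffordₛₗ_cliffordEigenPiece]
  · rw [map_galActClifford_restrictScalars, map_galActCliffordₛₗ_cliffordTuplePiece hadj]
end

section
/- Let E be a number field of degree d over ℚ acting by self-adjoint endomorphisms on a ℚ-quadratic space (T,q), with orthogonal decomposition T_Ẽ = ⊕_i (T_i,q_i) over a normal closure Ẽ. Let Q be the E-valued quadratic form on T obtained by restricting q_1 along ι_1: T → T_1. Then for each i, the twisted algebra C^0(Q)_{σ_i} = C^0(Q) ⊗_E Ẽ (with E acting via σ_i) is canonically isomorphic as an Ẽ-algebra to C^0(q_i). Consequently Z_G(C^0(Q)) ≅ C^0(q_1) ⊗_Ẽ ⋯ ⊗_Ẽ C^0(q_d), and this isomorphism is equivariant for the natural Galois actions on both sides. -/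
open TensorProduct Module

variable (E F : Type) [Field E] [Field F] [Algebra ℚ E] [Algebra ℚ F]
variable (T : Type) [AddCommGroup T] [Module ℚ T] [Module E T] [IsScalarTower ℚ E T]
  [SMulCommClass ℚ E T]

/-!
For an embedding `σ`, the map `F ⊗_{E,σ} T → T_σ`, `a ⊗ t ↦ a • π_σ (1 ⊗ t)`, is well defined
because the projections intertwine the `E`-action, and onto because `π_σ` is. The eigenspaces are
independent and span `F ⊗_ℚ T`, so their dimensions add up to `[T : ℚ] = [E : ℚ] [T : E]`; each is
at most `[T : E]` and there are `[E : ℚ]` of them, so every one of these maps is an isomorphism.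
It is an isometry from the base change of `Q` to `q_σ`: a Galois automorphism `g` with
`g ∘ σ₁ = σ` commutes with the base change of `q` and carries `π_{σ₁}` to `π_σ`, whence
`q (π_σ (1 ⊗ t)) = g (σ₁ (Q t)) = σ (Q t)`, and a quadratic form on a base change is determined
by its values on the `1 ⊗ t`. Isometric quadratic spaces have isomorphic even Clifford algebras.
-/

set_option linter.unusedSectionVars false

variable {E F T}

theorem exists_algHom_comp_eq {K L N : Type*} [Field K] [Field L] [Field N] [Algebra K L]
    [Algebra K N] [Normal K N] (σ₁ σ : L →ₐ[K] N) : ∃ g : N →ₐ[K] N, g.comp σ₁ = σ := by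
  let : Algebra L N := σ₁.toRingHom.toAlgebra
  have : IsScalarTower K L N := IsScalarTower.of_algebraMap_eq fun x => (σ₁.commutes x).symm
  exact ⟨σ.liftNormal N, AlgHom.ext fun x => σ.liftNormal_commutes N x⟩

namespace CliffordAlgebra

variable {R M₁ M₂ : Type*} [CommRing R] [AddCommGroup M₁] [AddCommGroup M₂]
  [Module R M₁] [Module R M₂] {Q₁ : QuadraticForm R M₁} {Q₂ : QuadraticForm R M₂}

theorem map_mem_even (f : Q₁ →qᵢ Q₂) {x : CliffordAlgebra Q₁} (hx : x ∈ even Q₁) :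
    map f x ∈ even Q₂ := by
  induction x, hx using even_induction with
  | algebraMap r => simp
  | add x y _ _ ihx ihy => simpa using add_mem ihx ihy
  | ι_mul_ι_mul m₁ m₂ x _ ihx =>
    have hι : ι Q₂ (f m₁) * ι Q₂ (f m₂) ∈ even Q₂ := ι_mul_ι_mem_evenOdd_zero Q₂ (f m₁) (f m₂)
    simpa [mul_assoc] using mul_mem hι ihx

theorem map_even_equivOfIsometry (e : Q₁.IsometryEquiv Q₂) :
    (even Q₁).map (equivOfIsometry e).toAlgHom = even Q₂ := by
  refine le_antisymm (Subalgebra.map_le.mpr fun x hx => map_mem_even e.toIsometry hx)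
    fun x hx => ⟨equivOfIsometry e.symm x, map_mem_even e.symm.toIsometry hx, ?_⟩
  rw [← equivOfIsometry_symm]
  exact (equivOfIsometry e).apply_symm_apply x

noncomputable def evenEquivOfIsometry (e : Q₁.IsometryEquiv Q₂) : even Q₁ ≃ₐ[R] even Q₂ :=
  ((equivOfIsometry e).subalgebraMap (even Q₁)).trans
    (Subalgebra.equivOfEq _ _ (map_even_equivOfIsometry e))

end CliffordAlgebra

section GaloisConjugation

variable {K A M : Type*} [CommRing K] [CommRing A] [Algebra K A] [AddCommGroup M] [Module K M]

theorem rTensor_algHom_smul (g : A →ₐ[K] A) (c : A) (x : A ⊗[K] M) :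
    g.toLinearMap.rTensor M (c • x) = g c • g.toLinearMap.rTensor M x := by
  induction x using TensorProduct.induction_on with
  | zero => simp
  | tmul a t => simp [smul_tmul']
  | add x y hx hy => simp only [smul_add, map_add, hx, hy]

theorem rTensor_algHom_baseChange (g : A →ₐ[K] A) (f : M →ₗ[K] M) (x : A ⊗[K] M) :
    g.toLinearMap.rTensor M (f.baseChange A x) = f.baseChange A (g.toLinearMap.rTensor M x) := by
  induction x using TensorProduct.induction_on with
  | zero => simp
  | tmul a t => simp
  | add x y hx hy => simp only [map_add, hx, hy]

variable [Invertible (2 : K)] [Invertible (2 : A)] (Q : QuadraticForm K M)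

theorem polar_baseChange_rTensor_algHom (g : A →ₐ[K] A) (x y : A ⊗[K] M) :
    QuadraticMap.polar (Q.baseChange A) (g.toLinearMap.rTensor M x) (g.toLinearMap.rTensor M y)
      = g (QuadraticMap.polar (Q.baseChange A) x y) := by
  simp only [← QuadraticMap.polarBilin_apply_apply, QuadraticForm.polarBilin_baseChange]
  induction x using TensorProduct.induction_on with
  | zero => simp
  | add x₁ x₂ h₁ h₂ => simp only [map_add, LinearMap.add_apply, h₁, h₂]
  | tmul a t =>
    induction y using TensorProduct.induction_on with
    | zero => simp
    | add y₁ y₂ h₁ h₂ => simp only [map_add, h₁, h₂]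
    | tmul b s => simp [Algebra.smul_def]

theorem baseChange_rTensor_algHom (g : A →ₐ[K] A) (x : A ⊗[K] M) :
    Q.baseChange A (g.toLinearMap.rTensor M x) = g (Q.baseChange A x) := by
  induction x using TensorProduct.induction_on with
  | zero => simp
  | tmul a t => simp [Algebra.smul_def]
  | add x y hx hy =>
    have hpolar := polar_baseChange_rTensor_algHom Q g x y
    simp only [QuadraticMap.polar, map_sub, hx, hy] at hpolar
    rw [map_add]
    linear_combination hpolar

end GaloisConjugation

section Eigenspaces

theorem mem_eigenspaceE {σ : E →ₐ[ℚ] F} {x : F ⊗[ℚ] T} :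
    x ∈ eigenspaceE E F T σ ↔ ∀ e : E, (smulE E T e).baseChange F x = σ e • x := by
  simp [eigenspaceE, Submodule.mem_iInf]

theorem commute_baseChange_smulE (e e' : E) :
    Commute ((smulE E T e).baseChange F) ((smulE E T e').baseChange F) := by
  have h : smulE E T e ∘ₗ smulE E T e' = smulE E T e' ∘ₗ smulE E T e :=
    LinearMap.ext fun t => by simp [smulE, smul_smul, mul_comm]
  simp only [Commute, SemiconjBy, Module.End.mul_eq_comp, ← LinearMap.baseChange_comp, h]

theorem iSupIndep_eigenspaceE : iSupIndep (eigenspaceE E F T) := by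
  have hindep := Module.End.independent_iInf_maxGenEigenspace_of_forall_mapsTo
    (fun e => (smulE E T e).baseChange F)
    (fun e e' μ => Module.End.mapsTo_maxGenEigenspace_of_comm (commute_baseChange_smulE e' e) μ)
  exact (hindep.comp DFunLike.coe_injective).mono fun σ =>
    iInf_mono fun e => Module.End.eigenspace_le_maxGenEigenspace

theorem rTensor_algHom_mem_eigenspaceE (g : F →ₐ[ℚ] F) {σ : E →ₐ[ℚ] F} {x : F ⊗[ℚ] T}
    (hx : x ∈ eigenspaceE E F T σ) :
    g.toLinearMap.rTensor T x ∈ eigenspaceE E F T (g.comp σ) := by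
  rw [mem_eigenspaceE] at hx ⊢
  intro e
  rw [← rTensor_algHom_baseChange, hx e, rTensor_algHom_smul]
  rfl

end Eigenspaces

section Projections

variable [FiniteDimensional ℚ E] (π : (E →ₐ[ℚ] F) → ((F ⊗[ℚ] T) →ₗ[F] (F ⊗[ℚ] T)))
  (hπ₁ : ∀ σ x, π σ x ∈ eigenspaceE E F T σ) (hπ₃ : ∀ x, ∑ σ : E →ₐ[ℚ] F, π σ x = x)
include hπ₁ hπ₃

theorem proj_eq_of_sum_eq {x : F ⊗[ℚ] T} {z : (E →ₐ[ℚ] F) → F ⊗[ℚ] T}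
    (hz : ∀ τ, z τ ∈ eigenspaceE E F T τ) (hsum : ∑ τ, z τ = x) (σ : E →ₐ[ℚ] F) :
    π σ x = z σ :=
  (iSupIndep_iff_finsetSum_eq_imp_eq _).mp iSupIndep_eigenspaceE Finset.univ _ _
    (fun τ _ => ⟨hπ₁ τ x, hz τ⟩) (by rw [hπ₃, hsum]) σ (Finset.mem_univ σ)

theorem proj_eq_self {σ : E →ₐ[ℚ] F} {x : F ⊗[ℚ] T} (hx : x ∈ eigenspaceE E F T σ) :
    π σ x = x := by
  classical
  have hz : ∀ τ, (Pi.single σ x : (E →ₐ[ℚ] F) → F ⊗[ℚ] T) τ ∈ eigenspaceE E F T τ := fun τ => by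
    by_cases h : τ = σ
    · subst h; simpa using hx
    · simp [h]
  simpa using proj_eq_of_sum_eq π hπ₁ hπ₃ hz (by simp) σ

theorem proj_baseChange_smulE (σ : E →ₐ[ℚ] F) (e : E) (x : F ⊗[ℚ] T) :
    π σ ((smulE E T e).baseChange F x) = σ e • π σ x := by
  refine proj_eq_of_sum_eq π hπ₁ hπ₃ (z := fun τ => τ e • π τ x)
    (fun τ => Submodule.smul_mem _ _ (hπ₁ τ x)) ?_ σ
  calc ∑ τ, τ e • π τ x = ∑ τ, (smulE E T e).baseChange F (π τ x) :=
        Finset.sum_congr rfl fun τ _ => (mem_eigenspaceE.mp (hπ₁ τ x) e).symm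
    _ = (smulE E T e).baseChange F x := by rw [← map_sum, hπ₃]

theorem proj_comp_rTensor_algHom (g : F →ₐ[ℚ] F) (σ : E →ₐ[ℚ] F) (x : F ⊗[ℚ] T) :
    π (g.comp σ) (g.toLinearMap.rTensor T x) = g.toLinearMap.rTensor T (π σ x) := by
  have hinj : Function.Injective fun τ : E →ₐ[ℚ] F => g.comp τ := fun τ τ' h =>
    AlgHom.ext fun e => g.toRingHom.injective (DFunLike.congr_fun h e)
  refine (iSupIndep_iff_finsetSum_eq_imp_eq _).mp (iSupIndep_eigenspaceE.comp hinj)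
    Finset.univ _ _ (fun τ _ => ⟨hπ₁ _ _, rTensor_algHom_mem_eigenspaceE g (hπ₁ τ x)⟩) ?_ σ
    (Finset.mem_univ σ)
  rw [← map_sum, hπ₃]
  exact (Fintype.sum_bijective _ (Finite.injective_iff_bijective.mp hinj) _ _ fun _ => rfl).trans
    (hπ₃ _)

end Projections

section Values

variable [FiniteDimensional ℚ E] [Normal ℚ F] {π : (E →ₐ[ℚ] F) → ((F ⊗[ℚ] T) →ₗ[F] (F ⊗[ℚ] T))}
  (hπ₁ : ∀ σ x, π σ x ∈ eigenspaceE E F T σ) (hπ₃ : ∀ x, ∑ σ : E →ₐ[ℚ] F, π σ x = x)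
  (q : QuadraticForm ℚ T) {σ₁ : E →ₐ[ℚ] F} {Q : QuadraticForm E T}
  (hQ : ∀ t : T, σ₁ (Q t) = (q.baseChange F) (π σ₁ ((1 : F) ⊗ₜ[ℚ] t)))
include hπ₁ hπ₃ hQ

theorem baseChange_proj_one_tmul (σ : E →ₐ[ℚ] F) (t : T) :
    q.baseChange F (π σ (1 ⊗ₜ t)) = σ (Q t) := by
  have : CharZero F := charZero_of_injective_algebraMap (algebraMap ℚ F).injective
  have : Invertible (2 : F) := invertibleOfNonzero two_ne_zero
  obtain ⟨g, rfl⟩ := exists_algHom_comp_eq σ₁ σ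
  have hone : g.toLinearMap.rTensor T ((1 : F) ⊗ₜ t) = 1 ⊗ₜ t := by simp
  rw [← hone, proj_comp_rTensor_algHom π hπ₁ hπ₃, baseChange_rTensor_algHom, ← hQ,
    AlgHom.comp_apply]

end Values

section Twisted

/- Here `σ : E → F` is the structure map of the `E`-algebra `F`, so `F ⊗[E] T` is the twisted
base change `F ⊗_{E,σ} T`. -/
variable [FiniteDimensional ℚ E] [Algebra E F] [IsScalarTower ℚ E F]
  (π : (E →ₐ[ℚ] F) → ((F ⊗[ℚ] T) →ₗ[F] (F ⊗[ℚ] T)))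
  (hπ₁ : ∀ σ x, π σ x ∈ eigenspaceE E F T σ) (hπ₃ : ∀ x, ∑ σ : E →ₐ[ℚ] F, π σ x = x)
include hπ₁ hπ₃

noncomputable def restrictedProj : T →ₗ[E] F ⊗[ℚ] T where
  toFun t := π (IsScalarTower.toAlgHom ℚ E F) (1 ⊗ₜ t)
  map_add' t t' := by rw [tmul_add, map_add]
  map_smul' e t := by
    have h : (1 : F) ⊗ₜ[ℚ] (e • t) = (smulE E T e).baseChange F (1 ⊗ₜ t) := rfl
    rw [h, proj_baseChange_smulE π hπ₁ hπ₃]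
    exact algebraMap_smul F e _

noncomputable def twistedProj : F ⊗[E] T →ₗ[F] F ⊗[ℚ] T :=
  (restrictedProj π hπ₁ hπ₃).liftBaseChange F

theorem twistedProj_tmul (a : F) (t : T) :
    twistedProj π hπ₁ hπ₃ (a ⊗ₜ t) = π (IsScalarTower.toAlgHom ℚ E F) (a ⊗ₜ t) := by
  rw [twistedProj, LinearMap.liftBaseChange_tmul, restrictedProj, LinearMap.coe_mk,
    AddHom.coe_mk, ← map_smul, smul_tmul', smul_eq_mul, mul_one]

theorem twistedProj_mem_eigenspaceE (x : F ⊗[E] T) :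
    twistedProj π hπ₁ hπ₃ x ∈ eigenspaceE E F T (IsScalarTower.toAlgHom ℚ E F) := by
  induction x using TensorProduct.induction_on with
  | zero => simp
  | tmul a t => exact twistedProj_tmul π hπ₁ hπ₃ a t ▸ hπ₁ _ _
  | add x y hx hy => exact map_add (twistedProj π hπ₁ hπ₃) x y ▸ add_mem hx hy

theorem proj_mem_range_twistedProj (x : F ⊗[ℚ] T) :
    π (IsScalarTower.toAlgHom ℚ E F) x ∈ LinearMap.range (twistedProj π hπ₁ hπ₃) := by
  induction x using TensorProduct.induction_on with
  | zero => simp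
  | tmul a t => exact ⟨a ⊗ₜ t, twistedProj_tmul π hπ₁ hπ₃ a t⟩
  | add x y hx hy => rw [map_add]; exact add_mem hx hy

theorem surjective_codRestrict_twistedProj :
    Function.Surjective ((twistedProj π hπ₁ hπ₃).codRestrict _
      (twistedProj_mem_eigenspaceE π hπ₁ hπ₃)) := by
  rintro ⟨y, hy⟩
  obtain ⟨x, hx⟩ := proj_mem_range_twistedProj π hπ₁ hπ₃ y
  exact ⟨x, Subtype.ext (hx.trans (proj_eq_self π hπ₁ hπ₃ hy))⟩

end Twisted

section Dimension

variable [FiniteDimensional ℚ E] [FiniteDimensional E T]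
  (π : (E →ₐ[ℚ] F) → ((F ⊗[ℚ] T) →ₗ[F] (F ⊗[ℚ] T)))
  (hπ₁ : ∀ σ x, π σ x ∈ eigenspaceE E F T σ) (hπ₃ : ∀ x, ∑ σ : E →ₐ[ℚ] F, π σ x = x)
include hπ₁ hπ₃

theorem finrank_eigenspaceE_le (τ : E →ₐ[ℚ] F) :
    finrank F (eigenspaceE E F T τ) ≤ finrank E T := by
  let : Algebra E F := τ.toRingHom.toAlgebra
  have : IsScalarTower ℚ E F := .of_algebraMap_eq fun x => (τ.commutes x).symm
  change finrank F (eigenspaceE E F T (IsScalarTower.toAlgHom ℚ E F)) ≤ _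
  rw [← Module.finrank_baseChange (R := F) (S := E)]
  exact LinearMap.finrank_le_finrank_of_surjective (surjective_codRestrict_twistedProj π hπ₁ hπ₃)

open Classical in
theorem isInternal_eigenspaceE : DirectSum.IsInternal (eigenspaceE E F T) :=
  (DirectSum.isInternal_submodule_iff_iSupIndep_and_iSup_eq_top _).mpr
    ⟨iSupIndep_eigenspaceE, Submodule.eq_top_iff'.mpr fun x =>
      hπ₃ x ▸ Submodule.sum_mem_iSup fun σ => hπ₁ σ x⟩

theorem finrank_eigenspaceE (hcard : Fintype.card (E →ₐ[ℚ] F) = finrank ℚ E)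
    (σ : E →ₐ[ℚ] F) : finrank F (eigenspaceE E F T σ) = finrank E T := by
  classical
  have : Module.Finite ℚ T := .trans E T
  have : ∀ τ, Module.Free F (eigenspaceE E F T τ) := fun τ =>
    .of_divisionRing F (eigenspaceE E F T τ)
  have hsum : ∑ τ, finrank F (eigenspaceE E F T τ) = ∑ _τ : E →ₐ[ℚ] F, finrank E T := by
    have hdecomp := LinearEquiv.ofBijective (DirectSum.coeLinearMap _)
      (isInternal_eigenspaceE π hπ₁ hπ₃)
    rw [← Module.finrank_directSum, hdecomp.finrank_eq, Module.finrank_baseChange,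
      Finset.sum_const, Finset.card_univ, hcard, smul_eq_mul, Module.finrank_mul_finrank]
  exact (Finset.sum_eq_sum_iff_of_le fun τ _ => finrank_eigenspaceE_le π hπ₁ hπ₃ τ).mp hsum σ
    (Finset.mem_univ σ)

end Dimension

section Isometry

variable [FiniteDimensional ℚ E] [FiniteDimensional E T] [Algebra E F] [IsScalarTower ℚ E F]
  (π : (E →ₐ[ℚ] F) → ((F ⊗[ℚ] T) →ₗ[F] (F ⊗[ℚ] T)))
  (hπ₁ : ∀ σ x, π σ x ∈ eigenspaceE E F T σ) (hπ₃ : ∀ x, ∑ σ : E →ₐ[ℚ] F, π σ x = x)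
  (hcard : Fintype.card (E →ₐ[ℚ] F) = finrank ℚ E)
include hπ₁ hπ₃ hcard

theorem bijective_codRestrict_twistedProj :
    Function.Bijective ((twistedProj π hπ₁ hπ₃).codRestrict _
      (twistedProj_mem_eigenspaceE π hπ₁ hπ₃)) := by
  have hsurj := surjective_codRestrict_twistedProj π hπ₁ hπ₃
  have hfinrank : finrank F (F ⊗[E] T) =
      finrank F (eigenspaceE E F T (IsScalarTower.toAlgHom ℚ E F)) := by
    rw [Module.finrank_baseChange, finrank_eigenspaceE π hπ₁ hπ₃ hcard]
  have : Module.Finite ℚ T := .trans E T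
  exact ⟨(LinearMap.injective_iff_surjective_of_finrank_eq_finrank (V := F ⊗[E] T)
    (V₂ := eigenspaceE E F T (IsScalarTower.toAlgHom ℚ E F)) hfinrank).mpr hsurj, hsurj⟩

noncomputable def twistedEquiv :
    F ⊗[E] T ≃ₗ[F] eigenspaceE E F T (IsScalarTower.toAlgHom ℚ E F) :=
  LinearEquiv.ofBijective _ (bijective_codRestrict_twistedProj π hπ₁ hπ₃ hcard)

theorem twistedEquiv_apply (x : F ⊗[E] T) :
    (twistedEquiv π hπ₁ hπ₃ hcard x : F ⊗[ℚ] T) = twistedProj π hπ₁ hπ₃ x :=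
  rfl

variable [Normal ℚ F] [Invertible (2 : E)] (q : QuadraticForm ℚ T) {σ₁ : E →ₐ[ℚ] F}
  {Q : QuadraticForm E T} (hQ : ∀ t : T, σ₁ (Q t) = (q.baseChange F) (π σ₁ ((1 : F) ⊗ₜ[ℚ] t)))
include hQ

noncomputable def twistedIsometryEquiv :
    (Q.baseChange F).IsometryEquiv
      ((q.baseChange F).comp (eigenspaceE E F T (IsScalarTower.toAlgHom ℚ E F)).subtype) where
  __ := twistedEquiv π hπ₁ hπ₃ hcard
  map_app' := by
    have h : ((q.baseChange F).comp (eigenspaceE E F T _).subtype).comp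
        (twistedEquiv π hπ₁ hπ₃ hcard).toLinearMap = Q.baseChange F := by
      ext t
      rw [QuadraticMap.comp_apply, QuadraticMap.comp_apply, Submodule.subtype_apply,
        LinearEquiv.coe_coe, twistedEquiv_apply, twistedProj_tmul,
        baseChange_proj_one_tmul hπ₁ hπ₃ q hQ, QuadraticForm.baseChange_tmul, mul_one,
        Algebra.smul_def, mul_one]
      rfl
    exact fun x => DFunLike.congr_fun h x

end Isometry

/-- Let a number field `E` of degree `d` act by self-adjoint
endomorphisms on a `ℚ`-quadratic space `(T,q)`, with orthogonal eigenspace decomposition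
`T_F = ⊕_σ (T_σ, q_σ)` over a normal closure `F` (with projections `π σ`, and
`ι₁ = π σ₁ ∘ (t ↦ 1 ⊗ t)`).  Let `Q` be the `E`-valued quadratic form on `T` obtained by
restricting `q₁` along `ι₁` (hypothesis `hQ`).  Then for each embedding `σ : E ↪ F`, the
twisted algebra `C⁰(Q)_σ = C⁰(Q) ⊗_{E,σ} F` is isomorphic as an `F`-algebra to
`C⁰(q_σ)`; consequently `Z_G(C⁰(Q)) ≅ C⁰(q₁) ⊗_F ⋯ ⊗_F C⁰(q_d)`. -/
theorem twisted_even_clifford_iso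
    [FiniteDimensional ℚ E] [Normal ℚ F]
    [FiniteDimensional E T]
    (hcard : Fintype.card (E →ₐ[ℚ] F) = finrank ℚ E)
    (q : QuadraticForm ℚ T)
    (π : (E →ₐ[ℚ] F) → ((F ⊗[ℚ] T) →ₗ[F] (F ⊗[ℚ] T)))
    (hπ₁ : ∀ σ x, π σ x ∈ eigenspaceE E F T σ)
    (hπ₃ : ∀ x, ∑ σ : E →ₐ[ℚ] F, π σ x = x)
    (σ₁ : E →ₐ[ℚ] F)
    (Q : QuadraticForm E T)
    (hQ : ∀ t : T, σ₁ (Q t) = (q.baseChange F) (π σ₁ ((1 : F) ⊗ₜ[ℚ] t))) :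
    ∀ σ : E →ₐ[ℚ] F,
      letI : Algebra E F := σ.toRingHom.toAlgebra
      letI : Invertible (2 : E) := invertibleOfNonzero (by
        intro h
        exact two_ne_zero ((algebraMap ℚ E).injective (by simpa using congrArg id h)))
      Nonempty
        ((CliffordAlgebra.even (Q.baseChange F)) ≃ₐ[F]
          (CliffordAlgebra.even (R := F) (M := eigenspaceE E F T σ)
            ((q.baseChange F).comp (eigenspaceE E F T σ).subtype))) := by
  intro σ
  let : Algebra E F := σ.toRingHom.toAlgebra
  have : CharZero E := charZero_of_injective_algebraMap (algebraMap ℚ E).injective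
  let : Invertible (2 : E) := invertibleOfNonzero two_ne_zero
  have : IsScalarTower ℚ E F := .of_algebraMap_eq fun x => (σ.commutes x).symm
  exact ⟨CliffordAlgebra.evenEquivOfIsometry (twistedIsometryEquiv π hπ₁ hπ₃ hcard q hQ)⟩
end

section
/- Let d > 0 be a rational number expressible as d = c² + e² with c, e ∈ ℚ, e ≠ 0, and let E = ℚ(√d). Then the quaternion algebras (−d, √d(d − √d c))_E and (−1, √d − c)_E over E are isomorphic. -/
/-!
Since `d = (√d)²`, the two parameters of the first algebra are `(√d)² · (-1)` and
`(√d)² · (√d - c)`. Rescaling the generators `i ↦ u i`, `j ↦ v j` by units identifies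
`(u² a, v² b)` with `(a, b)`, so taking `u = v = √d` gives the isomorphism.
-/

open Quaternion

namespace QuaternionAlgebra

variable {R : Type*} [CommRing R]

def rescaleEquiv (c₁ c₂ c₃ : R) (u v : Rˣ) :
    ℍ[R, u ^ 2 * c₁, u * c₂, v ^ 2 * c₃] ≃ₐ[R] ℍ[R, c₁, c₂, c₃] where
  toFun x := ⟨x.re, u * x.imI, v * x.imJ, ↑(u * v) * x.imK⟩
  invFun x := ⟨x.re, ↑u⁻¹ * x.imI, ↑v⁻¹ * x.imJ, ↑(u * v)⁻¹ * x.imK⟩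
  left_inv x := by
    ext
    exacts [rfl, u.inv_mul_cancel_left _, v.inv_mul_cancel_left _, (u * v).inv_mul_cancel_left _]
  right_inv x := by
    ext
    exacts [rfl, u.mul_inv_cancel_left _, v.mul_inv_cancel_left _, (u * v).mul_inv_cancel_left _]
  map_mul' x y := by ext <;> simp <;> ring
  map_add' x y := by ext <;> simp <;> ring
  commutes' r := by ext <;> simp

end QuaternionAlgebra

theorem quaternion_algebras_isomorphic_general
    (d c : ℚ) (hd0 : 0 < d)
    (E : Type) [Field E] [Algebra ℚ E]
    (sd : E) (hsd : sd ^ 2 = algebraMap ℚ E d) :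
    Nonempty
      ((ℍ[E, -(algebraMap ℚ E d), sd * (algebraMap ℚ E d - sd * algebraMap ℚ E c)])
        ≃ₐ[E] ℍ[E, -1, sd - algebraMap ℚ E c]) := by
  have hsd0 : sd ≠ 0 := by
    rintro rfl
    exact hd0.ne' <| (map_eq_zero (algebraMap ℚ E)).mp (by simpa using hsd.symm)
  set s := Units.mk0 sd hsd0
  have ha : -(algebraMap ℚ E d) = (s : E) ^ 2 * -1 := by simp [s, hsd]
  have hb : sd * (algebraMap ℚ E d - sd * algebraMap ℚ E c) =
      (s : E) ^ 2 * (sd - algebraMap ℚ E c) := by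
    simp only [s, Units.val_mk0, ← hsd]
    ring
  have e := QuaternionAlgebra.rescaleEquiv (-1) 0 (sd - algebraMap ℚ E c) s s
  rw [mul_zero, ← ha, ← hb] at e
  exact ⟨e⟩

/-- Let `d > 0` be a rational number with `d = c² + e²`, `c, e ∈ ℚ`,
`e ≠ 0`, and let `E = ℚ(√d)`.  Then the quaternion algebras
`(−d, √d(d − √d c))_E` and `(−1, √d − c)_E` over `E` are isomorphic. -/
theorem quaternion_algebras_isomorphic
    (d c e : ℚ) (hd0 : 0 < d) (hd : d = c ^ 2 + e ^ 2) (he : e ≠ 0)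
    (E : Type) [Field E] [Algebra ℚ E] [FiniteDimensional ℚ E]
    (hE : Module.finrank ℚ E = 2)
    (sd : E) (hsd : sd ^ 2 = algebraMap ℚ E d) (hgen : Algebra.adjoin ℚ {sd} = ⊤) :
    Nonempty
      ((ℍ[E, -(algebraMap ℚ E d), sd * (algebraMap ℚ E d - sd * algebraMap ℚ E c)])
        ≃ₐ[E] ℍ[E, -1, sd - algebraMap ℚ E c]) :=
  quaternion_algebras_isomorphic_general d c hd0 E sd hsd
end
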